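/- arXiv:2110.12097 — 7 statements merged into one kernel-verified Lean document; each statement's English description precedes it below -/
import Mathlib

section
/- Let ω > 0, let y : ℝ → ℝ be twice differentiable with y''(t) = ω²(y(t) − x_foot) for all t ∈ ℝ, y(0) = x₀, y'(0) = ẋ₀, and suppose A = ((x₀ − x_foot) + ẋ₀/ω)/2 > 0. Then y(t) + y'(t)/ω − x_foot = 2A·e^{ωt} > 0 for all t, and the elapsed time is recovered from the state by t = (1/ω)·log((y(t) + y'(t)/ω − x_foot)/(2A)) for all t ∈ ℝ. -/
/-!
The divergent component `ξ = y + y'/ω − x_foot` decouples from the PIPM dynamics: the ODE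
`y'' = ω²(y − x_foot)` gives `ξ' = ω ξ`, so `ξ(t) = ξ(0) e^{ωt}` with `ξ(0) = 2A`.
Positivity of `A` makes `ξ` positive, and taking logarithms returns `t`.
-/

open Real

theorem eq_exp_smul_of_hasDerivAt_smul {E : Type*} [NormedAddCommGroup E] [NormedSpace ℝ E]
    {f : ℝ → E} {c : ℝ} (hf : ∀ t, HasDerivAt f (c • f t) t) (t : ℝ) :
    f t = exp (c * t) • f 0 := by
  have hdamped : ∀ s, HasDerivAt (fun s ↦ exp (-(c * s)) • f s) 0 s := by
    intro s
    have hexp : HasDerivAt (fun s ↦ exp (-(c * s))) (exp (-(c * s)) * -c) s := by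
      simpa using ((hasDerivAt_id s).const_mul c).neg.exp
    refine (hexp.smul (hf s)).congr_deriv ?_
    rw [smul_smul, ← add_smul, mul_neg, add_neg_cancel, zero_smul]
  have hconst := is_const_of_deriv_eq_zero (fun s ↦ (hdamped s).differentiableAt)
    (fun s ↦ (hdamped s).deriv) t 0
  simp only [mul_zero, neg_zero, exp_zero, one_smul] at hconst
  rw [← hconst, smul_smul, ← exp_add, add_neg_cancel, exp_zero, one_smul]

noncomputable def divergentComponent (ω xfoot : ℝ) (y : ℝ → ℝ) (t : ℝ) : ℝ :=
  y t + deriv y t / ω - xfoot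

theorem hasDerivAt_divergentComponent {ω xfoot : ℝ} (hω : ω ≠ 0) {y : ℝ → ℝ} {t : ℝ}
    (hdiff : DifferentiableAt ℝ y t) (hdiff' : DifferentiableAt ℝ (deriv y) t)
    (hode : deriv (deriv y) t = ω ^ 2 * (y t - xfoot)) :
    HasDerivAt (divergentComponent ω xfoot y) (ω * divergentComponent ω xfoot y t) t := by
  refine ((hdiff.hasDerivAt.add (hdiff'.hasDerivAt.div_const ω)).sub_const xfoot).congr_deriv ?_
  rw [hode, divergentComponent]
  field_simp
  ring

theorem divergentComponent_eq_mul_exp {ω xfoot : ℝ} (hω : ω ≠ 0) {y : ℝ → ℝ}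
    (hdiff : ∀ t, DifferentiableAt ℝ y t) (hdiff' : ∀ t, DifferentiableAt ℝ (deriv y) t)
    (hode : ∀ t, deriv (deriv y) t = ω ^ 2 * (y t - xfoot)) (t : ℝ) :
    divergentComponent ω xfoot y t = divergentComponent ω xfoot y 0 * exp (ω * t) := by
  rw [mul_comm, ← smul_eq_mul]
  exact eq_exp_smul_of_hasDerivAt_smul
    (fun s ↦ hasDerivAt_divergentComponent hω (hdiff s) (hdiff' s) (hode s)) t

/-- If `A > 0`, then along the PIPM trajectory
`y(t) + y'(t)/ω − x_foot = 2A·e^{ωt} > 0` for all `t`, and the elapsed time is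
recovered from the state by `t = (1/ω)·log((y + y'/ω − x_foot)/(2A))`. -/
theorem pipm_time_recovery
    (ω xfoot x0 xdot0 A : ℝ) (hω : 0 < ω)
    (hA : A = ((x0 - xfoot) + xdot0 / ω) / 2) (hApos : 0 < A)
    (y : ℝ → ℝ)
    (hdiff : ∀ t, DifferentiableAt ℝ y t)
    (hdiff' : ∀ t, DifferentiableAt ℝ (deriv y) t)
    (hode : ∀ t, deriv (deriv y) t = ω ^ 2 * (y t - xfoot))
    (h0 : y 0 = x0) (h0' : deriv y 0 = xdot0) :
    ∀ t : ℝ,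
      y t + deriv y t / ω - xfoot = 2 * A * Real.exp (ω * t) ∧
      0 < y t + deriv y t / ω - xfoot ∧
      t = (1 / ω) * Real.log ((y t + deriv y t / ω - xfoot) / (2 * A)) := by
  intro t
  have hinit : divergentComponent ω xfoot y 0 = 2 * A := by
    rw [divergentComponent, h0, h0', hA]
    ring
  have hξ : y t + deriv y t / ω - xfoot = 2 * A * exp (ω * t) := by
    rw [← hinit]
    exact divergentComponent_eq_mul_exp hω.ne' hdiff hdiff' hode t
  refine ⟨hξ, hξ ▸ by positivity, ?_⟩
  rw [hξ, mul_div_cancel_left₀ _ (by positivity), log_exp]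
  field_simp
end

section
/- Let ω > 0, let y : ℝ → ℝ be twice differentiable with y''(t) = ω²(y(t) − x_foot) for all t ∈ ℝ, y(0) = x₀, y'(0) = ẋ₀, and suppose A = ((x₀ − x_foot) + ẋ₀/ω)/2 > 0 and B = ((x₀ − x_foot) − ẋ₀/ω)/2 > 0. Then t* = log(B/A)/(2ω) is the unique time at which y'(t*) = 0; moreover y(t*) = x_foot + 2√(AB), y'(t) < 0 for t < t*, y'(t) > 0 for t > t*, and y attains its global minimum value x_foot + 2√(AB) at t*. -/
/-!
Along any solution of `y'' = ω² (y - c)` the quantities `e^{ωt} (y' - ω (y - c))` and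
`e^{-ωt} (y' + ω (y - c))` are constant, which forces `y = c + A e^{ωt} + B e^{-ωt}`.
For `A, B > 0` the velocity `ω (A e^{ωt} - B e^{-ωt})` is strictly increasing and vanishes exactly
where `A e^{ωt} = B e^{-ωt} = √(AB)`; since the two terms have product `AB`, AM-GM bounds
their sum below by `2 √(AB)`.
-/

open Real

lemma two_mul_sqrt_mul_le_add {a b : ℝ} (ha : 0 ≤ a) (hb : 0 ≤ b) : 2 * √(a * b) ≤ a + b := by
  rw [sqrt_mul ha]
  nlinarith [sq_nonneg (√a - √b), sq_sqrt ha, sq_sqrt hb]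

section Pipm

variable {ω c : ℝ} {y y' : ℝ → ℝ}

lemma pipm_first_integral (hy : ∀ t, HasDerivAt y (y' t) t)
    (hy' : ∀ t, HasDerivAt y' (ω ^ 2 * (y t - c)) t) (t : ℝ) :
    (y' t - ω * (y t - c)) * exp (ω * t) = y' 0 - ω * (y 0 - c) := by
  have hderiv : ∀ s, HasDerivAt (fun s => (y' s - ω * (y s - c)) * exp (ω * s)) 0 s := by
    intro s
    have hexp : HasDerivAt (fun s => exp (ω * s)) (exp (ω * s) * ω) s := by
      simpa using ((hasDerivAt_id s).const_mul ω).exp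
    have hlin : HasDerivAt (fun s => y' s - ω * (y s - c)) (ω ^ 2 * (y s - c) - ω * y' s) s :=
      (hy' s).sub (((hy s).sub_const c).const_mul ω)
    exact (hlin.fun_mul hexp).congr_deriv (by ring)
  simpa using is_const_of_deriv_eq_zero (fun s => (hderiv s).differentiableAt)
    (fun s => (hderiv s).deriv) t 0

lemma pipm_eq_closed_form (hω : ω ≠ 0) (hy : ∀ t, HasDerivAt y (y' t) t)
    (hy' : ∀ t, HasDerivAt y' (ω ^ 2 * (y t - c)) t) {A B : ℝ}
    (hA : A = ((y 0 - c) + y' 0 / ω) / 2) (hB : B = ((y 0 - c) - y' 0 / ω) / 2) (t : ℝ) :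
    y t = c + A * exp (ω * t) + B * exp (-(ω * t)) ∧
      y' t = ω * (A * exp (ω * t) - B * exp (-(ω * t))) := by
  have hu := pipm_first_integral hy hy' t
  -- the equation only sees `ω ^ 2`, so the first integral for `-ω` is the second one
  have hv := pipm_first_integral (ω := -ω) hy (by simpa only [neg_sq] using hy') t
  simp only [neg_mul, sub_neg_eq_add] at hv
  have hu0 : y' 0 - ω * (y 0 - c) = -(2 * ω * B) := by rw [hB]; field_simp; ring
  have hv0 : y' 0 + ω * (y 0 - c) = 2 * ω * A := by rw [hA]; field_simp; ring
  have hinv : exp (ω * t) * exp (-(ω * t)) = 1 := by rw [← exp_add]; simp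
  constructor
  · apply mul_left_cancel₀ hω
    linear_combination (exp (ω * t) * hv - exp (-(ω * t)) * hu + exp (ω * t) * hv0
      - exp (-(ω * t)) * hu0 - 2 * ω * (y t - c) * hinv) / 2
  · linear_combination (exp (ω * t) * hv + exp (-(ω * t)) * hu + exp (ω * t) * hv0
      + exp (-(ω * t)) * hu0 - 2 * y' t * hinv) / 2

end Pipm

section Apex

variable {ω A B : ℝ}

lemma strictMono_pipm_velocity (hω : 0 < ω) (hA : 0 < A) (hB : 0 ≤ B) :
    StrictMono fun t => ω * (A * exp (ω * t) - B * exp (-(ω * t))) := by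
  intro s t hst
  have hA' : A * exp (ω * s) < A * exp (ω * t) := by gcongr
  have hB' : B * exp (-(ω * t)) ≤ B * exp (-(ω * s)) := by gcongr
  exact mul_lt_mul_of_pos_left (by linarith) hω

lemma pipm_apex_terms_eq_sqrt (hω : ω ≠ 0) (hA : 0 < A) (hB : 0 < B) :
    A * exp (ω * (log (B / A) / (2 * ω))) = √(A * B) ∧
      B * exp (-(ω * (log (B / A) / (2 * ω)))) = √(A * B) := by
  have hlog : ω * (log (B / A) / (2 * ω)) + ω * (log (B / A) / (2 * ω)) = log (B / A) := by
    field_simp; ring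
  have hsq : exp (ω * (log (B / A) / (2 * ω))) ^ 2 = B / A := by
    rw [sq, ← exp_add, hlog, exp_log (div_pos hB hA)]
  constructor
  · refine ((sqrt_eq_iff_eq_sq (by positivity) (by positivity)).2 ?_).symm
    rw [mul_pow, hsq]; field_simp
  · refine ((sqrt_eq_iff_eq_sq (by positivity) (by positivity)).2 ?_).symm
    rw [mul_pow, exp_neg, inv_pow, hsq]; field_simp

lemma two_mul_sqrt_le_pipm_position (hA : 0 ≤ A) (hB : 0 ≤ B) (t : ℝ) :
    2 * √(A * B) ≤ A * exp (ω * t) + B * exp (-(ω * t)) := by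
  have hprod : A * exp (ω * t) * (B * exp (-(ω * t))) = A * B := by
    rw [mul_mul_mul_comm, ← exp_add, add_neg_cancel, exp_zero, mul_one]
  simpa only [hprod] using two_mul_sqrt_mul_le_add (a := A * exp (ω * t)) (b := B * exp (-(ω * t)))
    (by positivity) (by positivity)

end Apex

/-- If `A > 0` and `B > 0`, then `t* = log(B/A)/(2ω)` is the
unique time at which the PIPM velocity vanishes; moreover
`y(t*) = x_foot + 2√(AB)`, the velocity is negative before `t*` and positive
after `t*`, and `y` attains its global minimum `x_foot + 2√(AB)` at `t*`. -/
theorem pipm_apex_time_unique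
    (ω xfoot x0 xdot0 A B : ℝ) (hω : 0 < ω)
    (hA : A = ((x0 - xfoot) + xdot0 / ω) / 2)
    (hB : B = ((x0 - xfoot) - xdot0 / ω) / 2)
    (hApos : 0 < A) (hBpos : 0 < B)
    (y : ℝ → ℝ)
    (hdiff : ∀ t, DifferentiableAt ℝ y t)
    (hdiff' : ∀ t, DifferentiableAt ℝ (deriv y) t)
    (hode : ∀ t, deriv (deriv y) t = ω ^ 2 * (y t - xfoot))
    (h0 : y 0 = x0) (h0' : deriv y 0 = xdot0)
    (tstar : ℝ) (htstar : tstar = Real.log (B / A) / (2 * ω)) :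
    deriv y tstar = 0 ∧
    (∀ t : ℝ, deriv y t = 0 → t = tstar) ∧
    y tstar = xfoot + 2 * Real.sqrt (A * B) ∧
    (∀ t : ℝ, t < tstar → deriv y t < 0) ∧
    (∀ t : ℝ, tstar < t → 0 < deriv y t) ∧
    (∀ t : ℝ, xfoot + 2 * Real.sqrt (A * B) ≤ y t) := by
  subst h0 h0' htstar
  have hy : ∀ t, HasDerivAt y (deriv y t) t := fun t => (hdiff t).hasDerivAt
  have hy' : ∀ t, HasDerivAt (deriv y) (ω ^ 2 * (y t - xfoot)) t :=
    fun t => hode t ▸ (hdiff' t).hasDerivAt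
  have hform := pipm_eq_closed_form hω.ne' hy hy' hA hB
  have hmono : StrictMono (deriv y) := by
    rw [funext fun t => (hform t).2]
    exact strictMono_pipm_velocity hω hApos hBpos.le
  obtain ⟨hAapex, hBapex⟩ := pipm_apex_terms_eq_sqrt hω.ne' hApos hBpos
  have hzero : deriv y (log (B / A) / (2 * ω)) = 0 := by
    rw [(hform _).2, hAapex, hBapex, sub_self, mul_zero]
  refine ⟨hzero, fun t ht => hmono.injective (ht.trans hzero.symm), ?_,
    fun t ht => hzero ▸ hmono ht, fun t ht => hzero ▸ hmono ht, fun t => ?_⟩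
  · rw [(hform _).1, hAapex, hBapex]
    ring
  · rw [(hform t).1]
    linarith [two_mul_sqrt_le_pipm_position (ω := ω) hApos.le hBpos.le t]
end

section
/- Let ω > 0, let y : ℝ → ℝ be twice differentiable with y''(t) = ω²(y(t) − x_foot) for all t ∈ ℝ, y(0) = x₀, y'(0) = ẋ₀, and suppose A = ((x₀ − x_foot) + ẋ₀/ω)/2 > 0 and B = ((x₀ − x_foot) − ẋ₀/ω)/2 < 0. Then the CoM moves forward for all time, i.e. y'(t) > 0 for every t ∈ ℝ, and there is a unique time t* = log(−B/A)/(2ω) at which the CoM crosses the stance foot, i.e. y(t*) = x_foot, and at that crossing y'(t*) = 2ω√(−AB). -/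
/-!
Writing `u = y - x_foot`, the combinations `u ± y'/ω` satisfy the first-order equations
`(u ± y'/ω)' = ±ω (u ± y'/ω)`, so they equal `2A e^{ωt}` and `2B e^{-ωt}`. Hence
`y - x_foot = A e^{ωt} + B e^{-ωt}` and `y' = ω (A e^{ωt} - B e^{-ωt})`. With `A > 0 > B` the
velocity is a sum of positive terms, the position vanishes exactly when `e^{2ωt} = -B/A`, and
there the two terms `A e^{ωt}` and `-B e^{-ωt}` coincide, each being the square root of their
product `-AB`.
-/

open Real

theorem eq_mul_exp_of_hasDerivAt {f : ℝ → ℝ} {k : ℝ} (hf : ∀ t, HasDerivAt f (k * f t) t)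
    (t : ℝ) : f t = f 0 * exp (k * t) := by
  have hconst : ∀ s, HasDerivAt (fun s => f s * exp (-(k * s))) 0 s := fun s => by
    refine ((hf s).mul ((hasDerivAt_id s).const_mul k).neg.exp).congr_deriv ?_
    simp only [id_eq, mul_one]
    ring
  have h := is_const_of_deriv_eq_zero (fun s => (hconst s).differentiableAt)
    (fun s => (hconst s).deriv) t 0
  simp only [mul_zero, neg_zero, exp_zero, mul_one] at h
  rw [← h, mul_assoc, ← exp_add, neg_add_cancel, exp_zero, mul_one]

section PIPM

variable {ω c : ℝ} {y : ℝ → ℝ}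

theorem hasDerivAt_pipm_mode {s : ℝ} (hs : s ≠ 0) (hsω : s ^ 2 = ω ^ 2)
    (hdiff : ∀ t, DifferentiableAt ℝ y t) (hdiff' : ∀ t, DifferentiableAt ℝ (deriv y) t)
    (hode : ∀ t, deriv (deriv y) t = ω ^ 2 * (y t - c)) (t : ℝ) :
    HasDerivAt (fun t => (y t - c) + deriv y t / s) (s * ((y t - c) + deriv y t / s)) t := by
  have h := ((hdiff t).hasDerivAt.sub_const c).fun_add ((hdiff' t).hasDerivAt.div_const s)
  rw [hode t, ← hsω] at h
  refine h.congr_deriv ?_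
  field_simp
  ring

theorem pipm_solution (hω : ω ≠ 0) {A B : ℝ}
    (hdiff : ∀ t, DifferentiableAt ℝ y t) (hdiff' : ∀ t, DifferentiableAt ℝ (deriv y) t)
    (hode : ∀ t, deriv (deriv y) t = ω ^ 2 * (y t - c))
    (hA : A = ((y 0 - c) + deriv y 0 / ω) / 2) (hB : B = ((y 0 - c) - deriv y 0 / ω) / 2)
    (t : ℝ) :
    y t = c + (A * exp (ω * t) + B * exp (-(ω * t))) ∧
      deriv y t = ω * (A * exp (ω * t) - B * exp (-(ω * t))) := by
  have hplus := eq_mul_exp_of_hasDerivAt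
    (hasDerivAt_pipm_mode hω rfl hdiff hdiff' hode) t
  have hminus := eq_mul_exp_of_hasDerivAt
    (hasDerivAt_pipm_mode (neg_ne_zero.2 hω) (neg_sq ω) hdiff hdiff' hode) t
  simp only [div_neg, ← sub_eq_add_neg, neg_mul] at hminus
  subst hA hB
  constructor
  · linear_combination (hplus + hminus) / 2
  · field_simp at hplus hminus ⊢
    linear_combination hplus - hminus

end PIPM

theorem mul_exp_add_mul_exp_neg_eq_zero_iff {ω A B t : ℝ} (hω : ω ≠ 0) (hA : A ≠ 0)
    (hBA : 0 < -B / A) :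
    A * exp (ω * t) + B * exp (-(ω * t)) = 0 ↔ t = log (-B / A) / (2 * ω) := by
  have hfactor : A * exp (ω * t) + B * exp (-(ω * t))
      = exp (-(ω * t)) * (A * exp (2 * ω * t) + B) := by
    have hsq : exp (2 * ω * t) = exp (ω * t) ^ 2 := by rw [← exp_nat_mul]; ring_nf
    have hinv : exp (-(ω * t)) * exp (ω * t) = 1 := by rw [← exp_add, neg_add_cancel, exp_zero]
    linear_combination -(A * exp (ω * t)) * hinv - (A * exp (-(ω * t))) * hsq
  rw [hfactor, mul_eq_zero, or_iff_right (exp_ne_zero _), add_eq_zero_iff_eq_neg,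
    mul_comm A, ← eq_div_iff hA, eq_div_iff (mul_ne_zero two_ne_zero hω),
    ← exp_eq_exp (x := t * (2 * ω)), exp_log hBA, mul_comm t]

theorem mul_exp_sub_mul_exp_neg_eq_two_sqrt {ω A B t : ℝ} (hA : 0 < A)
    (hzero : A * exp (ω * t) + B * exp (-(ω * t)) = 0) :
    A * exp (ω * t) - B * exp (-(ω * t)) = 2 * sqrt (-(A * B)) := by
  have hprod : -(A * B) = (A * exp (ω * t)) ^ 2 := by
    have h : exp (ω * t) * exp (-(ω * t)) = 1 := by rw [← exp_add, add_neg_cancel, exp_zero]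
    linear_combination -(A * exp (ω * t)) * hzero + A * B * h
  rw [hprod, sqrt_sq (by positivity)]
  linear_combination -hzero

/-- If `A > 0` and `B < 0`, then the CoM moves forward for all
time (`y' > 0`), and `t* = log(−B/A)/(2ω)` is the unique time at which the CoM
crosses the stance foot (`y(t*) = x_foot`), with crossing velocity
`y'(t*) = 2ω√(−AB)`. -/
theorem pipm_forward_crossing
    (ω xfoot x0 xdot0 A B : ℝ) (hω : 0 < ω)
    (hA : A = ((x0 - xfoot) + xdot0 / ω) / 2)
    (hB : B = ((x0 - xfoot) - xdot0 / ω) / 2)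
    (hApos : 0 < A) (hBneg : B < 0)
    (y : ℝ → ℝ)
    (hdiff : ∀ t, DifferentiableAt ℝ y t)
    (hdiff' : ∀ t, DifferentiableAt ℝ (deriv y) t)
    (hode : ∀ t, deriv (deriv y) t = ω ^ 2 * (y t - xfoot))
    (h0 : y 0 = x0) (h0' : deriv y 0 = xdot0)
    (tstar : ℝ) (htstar : tstar = Real.log (-B / A) / (2 * ω)) :
    (∀ t : ℝ, 0 < deriv y t) ∧
    y tstar = xfoot ∧
    (∀ t : ℝ, y t = xfoot → t = tstar) ∧
    deriv y tstar = 2 * ω * Real.sqrt (-(A * B)) := by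
  subst h0 h0' htstar
  have hsol := pipm_solution hω.ne' hdiff hdiff' hode hA hB
  have hcross := fun t => mul_exp_add_mul_exp_neg_eq_zero_iff (t := t) hω.ne' hApos.ne'
    (div_pos (neg_pos.2 hBneg) hApos)
  refine ⟨fun t => ?_, ?_, fun t ht => ?_, ?_⟩
  · rw [(hsol t).2]
    have hAe := mul_pos hApos (exp_pos (ω * t))
    have hBe := mul_neg_of_neg_of_pos hBneg (exp_pos (-(ω * t)))
    exact mul_pos hω (by linarith)
  · rw [(hsol _).1, (hcross _).2 rfl, add_zero]
  · have hyt := (hsol t).1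
    exact (hcross t).1 (by linarith)
  · rw [(hsol _).2, mul_exp_sub_mul_exp_neg_eq_two_sqrt hApos ((hcross _).2 rfl)]
    ring
end

section
/- Let ω > 0 and suppose x_foot,c < x_foot,n. Let x_switch = (1/2)·(C/(x_foot,n − x_foot,c) + (x_foot,c + x_foot,n)) with C = (x_apex,c − x_foot,c)² − (x_apex,n − x_foot,n)² + (v_apex,n² − v_apex,c²)/ω². Then the switching position lies between the two consecutive apex positions, x_apex,c ≤ x_switch ≤ x_apex,n, if and only if ω²(x_apex,n − x_apex,c)(x_apex,c + x_apex,n − 2x_foot,n) ≤ v_apex,n² − v_apex,c² ≤ ω²(x_apex,n − x_apex,c)(x_apex,c + x_apex,n − 2x_foot,c). -/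
/-!
Conservation of orbital energy gives the squared velocity on the PIPM orbit through the apex
`(x_a, v_a)` over the foot `x_f` as `v(x)² = v_a² + ω² ((x - x_f)² - (x_a - x_f)²)`.
The difference of the squared velocities of the current and the next orbit is affine in `x`, with
slope `2 ω² (x_foot,n - x_foot,c) > 0`, and vanishes at `x_switch`. Hence `x_apex,c ≤ x_switch`
iff the next orbit is at least as fast as the current one at `x_apex,c`, and `x_switch ≤ x_apex,n`
iff the current orbit is at least as fast as the next one at `x_apex,n`; evaluating the velocities
at the apexes turns these into the two inequalities.
-/

def pipmVelocitySq (ω xf xa va x : ℝ) : ℝ :=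
  va ^ 2 + ω ^ 2 * ((x - xf) ^ 2 - (xa - xf) ^ 2)

@[simp]
lemma pipmVelocitySq_apex (ω xf xa va : ℝ) : pipmVelocitySq ω xf xa va xa = va ^ 2 := by
  simp [pipmVelocitySq]

lemma pipmVelocitySq_sub_pipmVelocitySq {ω xfc xfn xac xan vac van xswitch C : ℝ}
    (hω : ω ≠ 0) (hfeet : xfc ≠ xfn)
    (hC : C = (xac - xfc) ^ 2 - (xan - xfn) ^ 2 + (van ^ 2 - vac ^ 2) / ω ^ 2)
    (hswitch : xswitch = (1 / 2) * (C / (xfn - xfc) + (xfc + xfn))) (x : ℝ) :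
    pipmVelocitySq ω xfc xac vac x - pipmVelocitySq ω xfn xan van x =
      2 * ω ^ 2 * (xfn - xfc) * (x - xswitch) := by
  have hd : xfn - xfc ≠ 0 := sub_ne_zero.2 hfeet.symm
  subst hswitch hC
  unfold pipmVelocitySq
  field_simp
  ring

/-- The switching position lies between the two consecutive apex
positions iff the apex velocities satisfy the stated two-sided inequality. -/
theorem switching_between_apexes_iff
    (ω xfc xfn xac xan vac van xswitch C : ℝ) (hω : 0 < ω)
    (hfeet : xfc < xfn)
    (hC : C = (xac - xfc) ^ 2 - (xan - xfn) ^ 2 + (van ^ 2 - vac ^ 2) / ω ^ 2)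
    (hswitch : xswitch = (1 / 2) * (C / (xfn - xfc) + (xfc + xfn))) :
    (xac ≤ xswitch ∧ xswitch ≤ xan) ↔
      (ω ^ 2 * (xan - xac) * (xac + xan - 2 * xfn) ≤ van ^ 2 - vac ^ 2 ∧
       van ^ 2 - vac ^ 2 ≤ ω ^ 2 * (xan - xac) * (xac + xan - 2 * xfc)) := by
  have hslope : 0 < 2 * ω ^ 2 * (xfn - xfc) := by
    have := sub_pos.2 hfeet
    positivity
  have hdiff := pipmVelocitySq_sub_pipmVelocitySq hω.ne' hfeet.ne hC hswitch
  have h_current : xac ≤ xswitch ↔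
      0 ≤ pipmVelocitySq ω xfn xan van xac - pipmVelocitySq ω xfc xac vac xac := by
    rw [← neg_sub, hdiff, ← mul_neg, neg_sub, mul_nonneg_iff_of_pos_left hslope, sub_nonneg]
  have h_next : xswitch ≤ xan ↔
      0 ≤ pipmVelocitySq ω xfc xac vac xan - pipmVelocitySq ω xfn xan van xan := by
    rw [hdiff, mul_nonneg_iff_of_pos_left hslope, sub_nonneg]
  have h_current_apex : pipmVelocitySq ω xfn xan van xac - vac ^ 2 =
      (van ^ 2 - vac ^ 2) - ω ^ 2 * (xan - xac) * (xac + xan - 2 * xfn) := by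
    unfold pipmVelocitySq; ring
  have h_next_apex : pipmVelocitySq ω xfc xac vac xan - van ^ 2 =
      ω ^ 2 * (xan - xac) * (xac + xan - 2 * xfc) - (van ^ 2 - vac ^ 2) := by
    unfold pipmVelocitySq; ring
  rw [h_current, h_next, pipmVelocitySq_apex, pipmVelocitySq_apex, h_current_apex, h_next_apex,
    sub_nonneg, sub_nonneg]
end

section
/- (Safety criterion for straight walking.) Let ω > 0 and d > 0, and consider a straight walking step in which the apexes lie over the feet: x_apex,c = x_foot,c, x_apex,n = x_foot,n, and d = x_apex,n − x_apex,c. Let x_switch = (1/2)·(C/(x_foot,n − x_foot,c) + (x_foot,c + x_foot,n)) with C = (x_apex,c − x_foot,c)² − (x_apex,n − x_foot,n)² + (v_apex,n² − v_apex,c²)/ω². Then the switching position satisfies x_apex,c ≤ x_switch ≤ x_apex,n if and only if the two consecutive apex velocities satisfy −ω²d² ≤ v_apex,n² − v_apex,c² ≤ ω²d². -/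
/-! With the apexes over the feet, the squared offsets in `C` vanish and `x_foot,n − x_foot,c = d`,
so the switch is the midpoint of the step shifted by `(v_apex,n² − v_apex,c²) / (2ω²d)`. It lies
between the apexes exactly when this shift is at most `d / 2` in absolute value. -/

section LinearOrderedField

variable {K : Type*} [Field K] [LinearOrder K] [IsStrictOrderedRing K]

lemma le_and_le_midpoint_add_iff_abs_le {a b s : K} :
    (a ≤ (a + b) / 2 + s / 2 ∧ (a + b) / 2 + s / 2 ≤ b) ↔ |s| ≤ b - a := by
  rw [abs_le]
  constructor <;> rintro ⟨h₁, h₂⟩ <;> constructor <;> linarith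

lemma abs_div_le_iff_abs_le_mul {c : K} (hc : 0 < c) (y d : K) : |y / c| ≤ d ↔ |y| ≤ c * d := by
  rw [abs_div, abs_of_pos hc, div_le_iff₀ hc, mul_comm]

end LinearOrderedField

/-- Safety criterion for straight walking: with apexes over the
feet and step length `d`, the switching position lies between the apexes iff
`−ω²d² ≤ v_apex,n² − v_apex,c² ≤ ω²d²`. -/
theorem straight_walking_safety_criterion
    (ω d xfc xfn xac xan vac van xswitch C : ℝ) (hω : 0 < ω) (hd : 0 < d)
    (hac : xac = xfc) (han : xan = xfn)
    (hstep : d = xan - xac)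
    (hC : C = (xac - xfc) ^ 2 - (xan - xfn) ^ 2 + (van ^ 2 - vac ^ 2) / ω ^ 2)
    (hswitch : xswitch = (1 / 2) * (C / (xfn - xfc) + (xfc + xfn))) :
    (xac ≤ xswitch ∧ xswitch ≤ xan) ↔
      (-(ω ^ 2 * d ^ 2) ≤ van ^ 2 - vac ^ 2 ∧ van ^ 2 - vac ^ 2 ≤ ω ^ 2 * d ^ 2) := by
  have hω2d : 0 < ω ^ 2 * d := by positivity
  have hfeet : xfn - xfc = d := by rw [hstep, hac, han]
  have hswitch_shift : xswitch = (xac + xan) / 2 + (van ^ 2 - vac ^ 2) / (ω ^ 2 * d) / 2 := by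
    rw [hswitch, hC, hac, han, hfeet]
    ring
  rw [hswitch_shift, le_and_le_midpoint_add_iff_abs_le, ← hstep,
    abs_div_le_iff_abs_le_mul hω2d, abs_le, mul_assoc, ← sq]
end

section
/- (Steering velocity constraint, first corollary.) Let ω > 0, d > 0, Δy₂ > 0 and 0 < Δθ < π/2, and consider a steering step whose state expressed in the new local frame after the turn has current position offset x_apex,c − x_foot,c = Δy₂·sin Δθ, current sagittal velocity v_apex,c·cos Δθ, next apex over the next foot (x_apex,n = x_foot,n), and step length d = x_apex,n − x_apex,c. Let x_switch be the velocity-continuity switching position x_switch = (1/2)·(C/(x_foot,n − x_foot,c) + (x_foot,c + x_foot,n)) with C = (x_apex,c − x_foot,c)² − (x_apex,n − x_foot,n)² + (v_apex,n² − (v_apex,c·cos Δθ)²)/ω². If x_apex,c ≤ x_switch ≤ x_apex,n, then −ω²d² ≤ v_apex,n² − (v_apex,c·cos Δθ)² ≤ ω²(d² + 2·Δy₂·d·sin Δθ). -/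
/-!
The switching position is the midpoint of the two feet shifted by `C / (2 (x_foot,n − x_foot,c))`,
so a position `x` lies before it exactly when `(x − x_foot,c)² − (x − x_foot,n)² ≤ C`.
With `a = Δy₂ sin Δθ > 0` and `V = v_apex,n² − (v_apex,c cos Δθ)²` we have `C = a² + V/ω²`;
evaluating the criterion at `x_apex,c` and at `x_apex,n = x_foot,n` turns the feasibility window
into `a² − d² ≤ a² + V/ω² ≤ (a + d)²`.
-/

noncomputable def switchPosition (C xfc xfn : ℝ) : ℝ :=
  (1 / 2) * (C / (xfn - xfc) + (xfc + xfn))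

section SwitchPosition

variable {C xfc xfn x : ℝ}

lemma le_switchPosition_iff (hfoot : xfc < xfn) :
    x ≤ switchPosition C xfc xfn ↔ (x - xfc) ^ 2 - (x - xfn) ^ 2 ≤ C := by
  have hD : 0 < xfn - xfc := sub_pos.mpr hfoot
  have hdiff : (x - xfc) ^ 2 - (x - xfn) ^ 2 = (2 * x - xfc - xfn) * (xfn - xfc) := by ring
  rw [hdiff, ← le_div_iff₀ hD, switchPosition]
  constructor <;> intro h <;> linarith

lemma switchPosition_le_iff (hfoot : xfc < xfn) :
    switchPosition C xfc xfn ≤ x ↔ C ≤ (x - xfc) ^ 2 - (x - xfn) ^ 2 := by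
  have hD : 0 < xfn - xfc := sub_pos.mpr hfoot
  have hdiff : (x - xfc) ^ 2 - (x - xfn) ^ 2 = (2 * x - xfc - xfn) * (xfn - xfc) := by ring
  rw [hdiff, ← div_le_iff₀ hD, switchPosition]
  constructor <;> intro h <;> linarith

end SwitchPosition

/-- Steering velocity constraint, first corollary: for a
steering step whose post-turn sagittal offset is `Δy₂·sin Δθ`, feasibility of
the switching position implies
`−ω²d² ≤ v_apex,n² − (v_apex,c·cos Δθ)² ≤ ω²(d² + 2Δy₂·d·sin Δθ)`. -/
theorem steering_velocity_constraint_first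
    (ω d Δy₂ Δθ xfc xfn xac xan vac van xswitch C : ℝ)
    (hω : 0 < ω) (hd : 0 < d) (hΔy₂ : 0 < Δy₂)
    (hθ0 : 0 < Δθ) (hθ1 : Δθ < Real.pi / 2)
    (hoff : xac - xfc = Δy₂ * Real.sin Δθ)
    (han : xan = xfn)
    (hstep : d = xan - xac)
    (hC : C = (xac - xfc) ^ 2 - (xan - xfn) ^ 2 +
          (van ^ 2 - (vac * Real.cos Δθ) ^ 2) / ω ^ 2)
    (hswitch : xswitch = (1 / 2) * (C / (xfn - xfc) + (xfc + xfn)))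
    (hfeas : xac ≤ xswitch ∧ xswitch ≤ xan) :
    -(ω ^ 2 * d ^ 2) ≤ van ^ 2 - (vac * Real.cos Δθ) ^ 2 ∧
    van ^ 2 - (vac * Real.cos Δθ) ^ 2 ≤
      ω ^ 2 * (d ^ 2 + 2 * Δy₂ * d * Real.sin Δθ) := by
  set V := van ^ 2 - (vac * Real.cos Δθ) ^ 2
  have hsin : 0 < Real.sin Δθ :=
    Real.sin_pos_of_pos_of_lt_pi hθ0 (by linarith [Real.pi_pos])
  have hfoot : xfc < xfn := by linarith [mul_pos hΔy₂ hsin]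
  have hω2 : 0 < ω ^ 2 := by positivity
  obtain ⟨hlo, hhi⟩ := hfeas
  rw [hswitch, ← switchPosition, le_switchPosition_iff hfoot] at hlo
  rw [hswitch, ← switchPosition, switchPosition_le_iff hfoot] at hhi
  have hxfc : xfc = xac - Δy₂ * Real.sin Δθ := by linarith
  have hxfn : xfn = xac + d := by linarith
  rw [hC, han, hxfc, hxfn] at hlo hhi
  have hV_lo : -d ^ 2 ≤ V / ω ^ 2 := by linear_combination hlo
  have hV_hi : V / ω ^ 2 ≤ d ^ 2 + 2 * Δy₂ * d * Real.sin Δθ := by linear_combination hhi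
  rw [le_div_iff₀ hω2] at hV_lo
  rw [div_le_iff₀ hω2] at hV_hi
  constructor <;> linarith
end

section
/- (Steering velocity constraint, second corollary.) Let ω > 0, Δy₂ > 0, 0 < Δθ < π/2, and d > Δy₂·sin Δθ, and consider a steering step whose state expressed in the new local frame after the turn has current position offset x_apex,c − x_foot,c = −Δy₂·sin Δθ, current sagittal velocity v_apex,c·cos Δθ, next apex over the next foot (x_apex,n = x_foot,n), and step length d = x_apex,n − x_apex,c. Let x_switch be the velocity-continuity switching position x_switch = (1/2)·(C/(x_foot,n − x_foot,c) + (x_foot,c + x_foot,n)) with C = (x_apex,c − x_foot,c)² − (x_apex,n − x_foot,n)² + (v_apex,n² − (v_apex,c·cos Δθ)²)/ω². If x_apex,c ≤ x_switch ≤ x_apex,n, then −ω²d² ≤ v_apex,n² − (v_apex,c·cos Δθ)² ≤ ω²(d² − 2·Δy₂·d·sin Δθ). -/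
/-!
Both orbits conserve the orbital energy `ω²(x − x_foot)² − v²`, so the velocities coincide exactly
where the two energies do; this makes `x_switch` the point where `(x − x_foot,c)² − (x − x_foot,n)²`,
an increasing affine function of `x` when `x_foot,c < x_foot,n`, equals `C`. Feasibility is therefore
`(x_apex,c − x_foot,c)² − (x_apex,c − x_foot,n)² ≤ C ≤ (x_apex,n − x_foot,c)² − (x_apex,n − x_foot,n)²`.
With offset `−s`, `s = Δy₂ sin Δθ`, and step length `d` this reads `s² − d² ≤ s² + V/ω² ≤ (d − s)²`.
-/

lemma sq_sub_sq_sub_eq_mul (x a b : ℝ) :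
    (x - a) ^ 2 - (x - b) ^ 2 = (2 * x - (a + b)) * (b - a) := by
  ring

lemma le_switch_iff {a b C x : ℝ} (hab : a < b) :
    x ≤ (1 / 2) * (C / (b - a) + (a + b)) ↔ (x - a) ^ 2 - (x - b) ^ 2 ≤ C := by
  rw [sq_sub_sq_sub_eq_mul, ← le_div_iff₀ (sub_pos.2 hab)]
  constructor <;> intro h <;> linarith

lemma switch_le_iff {a b C x : ℝ} (hab : a < b) :
    (1 / 2) * (C / (b - a) + (a + b)) ≤ x ↔ C ≤ (x - a) ^ 2 - (x - b) ^ 2 := by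
  rw [sq_sub_sq_sub_eq_mul, ← div_le_iff₀ (sub_pos.2 hab)]
  constructor <;> intro h <;> linarith

theorem steering_velocity_constraint_second_general
    (ω d Δy₂ Δθ xfc xfn xac xan vac van xswitch C : ℝ)
    (hω : 0 < ω)
    (hd : Δy₂ * Real.sin Δθ < d)
    (hoff : xac - xfc = -(Δy₂ * Real.sin Δθ))
    (han : xan = xfn)
    (hstep : d = xan - xac)
    (hC : C = (xac - xfc) ^ 2 - (xan - xfn) ^ 2 +
          (van ^ 2 - (vac * Real.cos Δθ) ^ 2) / ω ^ 2)
    (hswitch : xswitch = (1 / 2) * (C / (xfn - xfc) + (xfc + xfn)))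
    (hfeas : xac ≤ xswitch ∧ xswitch ≤ xan) :
    -(ω ^ 2 * d ^ 2) ≤ van ^ 2 - (vac * Real.cos Δθ) ^ 2 ∧
    van ^ 2 - (vac * Real.cos Δθ) ^ 2 ≤
      ω ^ 2 * (d ^ 2 - 2 * Δy₂ * d * Real.sin Δθ) := by
  set s := Δy₂ * Real.sin Δθ
  set V := van ^ 2 - (vac * Real.cos Δθ) ^ 2
  have hω2 : 0 < ω ^ 2 := by positivity
  have hfeet : xfc < xfn := by linarith
  obtain ⟨hlow, hhigh⟩ := hfeas
  rw [hswitch, le_switch_iff hfeet] at hlow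
  rw [hswitch, switch_le_iff hfeet] at hhigh
  have hxac : xac - xfn = -d := by linarith
  have hxan : xan - xfc = d - s := by linarith
  rw [hC, hoff, han, sub_self, hxac] at hlow
  rw [hC, hoff, han, sub_self, ← han, hxan] at hhigh
  constructor
  · have : -d ^ 2 ≤ V / ω ^ 2 := by linarith
    rw [le_div_iff₀ hω2] at this
    linarith
  · have : V / ω ^ 2 ≤ d ^ 2 - 2 * s * d := by nlinarith
    rw [div_le_iff₀ hω2] at this
    linarith

/-- Steering velocity constraint, second corollary: for a
steering step whose post-turn sagittal offset is `−Δy₂·sin Δθ`, feasibility of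
the switching position implies
`−ω²d² ≤ v_apex,n² − (v_apex,c·cos Δθ)² ≤ ω²(d² − 2Δy₂·d·sin Δθ)`. -/
theorem steering_velocity_constraint_second
    (ω d Δy₂ Δθ xfc xfn xac xan vac van xswitch C : ℝ)
    (hω : 0 < ω) (hΔy₂ : 0 < Δy₂)
    (hθ0 : 0 < Δθ) (hθ1 : Δθ < Real.pi / 2)
    (hd : Δy₂ * Real.sin Δθ < d)
    (hoff : xac - xfc = -(Δy₂ * Real.sin Δθ))
    (han : xan = xfn)
    (hstep : d = xan - xac)
    (hC : C = (xac - xfc) ^ 2 - (xan - xfn) ^ 2 +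
          (van ^ 2 - (vac * Real.cos Δθ) ^ 2) / ω ^ 2)
    (hswitch : xswitch = (1 / 2) * (C / (xfn - xfc) + (xfc + xfn)))
    (hfeas : xac ≤ xswitch ∧ xswitch ≤ xan) :
    -(ω ^ 2 * d ^ 2) ≤ van ^ 2 - (vac * Real.cos Δθ) ^ 2 ∧
    van ^ 2 - (vac * Real.cos Δθ) ^ 2 ≤
      ω ^ 2 * (d ^ 2 - 2 * Δy₂ * d * Real.sin Δθ) :=
  steering_velocity_constraint_second_general ω d Δy₂ Δθ xfc xfn xac xan vac van xswitch C hω hd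
    hoff han hstep hC hswitch hfeas
end
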